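/- arXiv:1712.00875 — 2 statements merged into one kernel-verified Lean document; each statement's English description precedes it below -/
import Mathlib

section
/- Let G be a locally finite weighted graph and x ~ y adjacent vertices such that the edge (x,y) is not contained in any cycle of length 3, 4, or 5. Then the Ollivier curvature satisfies κ(x,y) = 2w(x,y)(1/m(x) + 1/m(y)) - Deg(x) - Deg(y), where Deg(x) = (1/m(x)) Σ_z w(x,z). -/
open scoped BigOperators

/-- A locally finite weighted graph. -/
structure WeightedGraph (V : Type) where
  w : V → V → ℝ
  m : V → ℝ
  symm : ∀ x y, w x y = w y x
  loopless : ∀ x, w x x = 0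
  nonneg : ∀ x y, 0 ≤ w x y
  mpos : ∀ x, 0 < m x
  locFin : ∀ x, Set.Finite {y | w x y ≠ 0}

namespace WeightedGraph

variable {V : Type} (G : WeightedGraph V)

/-- The underlying simple graph. -/
def toSimple : SimpleGraph V where
  Adj x y := x ≠ y ∧ G.w x y ≠ 0
  symm := by
    constructor
    intro x y h
    exact ⟨h.1.symm, by rw [G.symm y x]; exact h.2⟩
  loopless := by constructor; intro x h; exact h.1 rfl

/-- The combinatorial graph distance. -/
noncomputable def dist (x y : V) : ℕ := G.toSimple.dist x y

/-- The graph Laplacian. -/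
noncomputable def lap (f : V → ℝ) (x : V) : ℝ :=
  (∑ᶠ y, G.w x y * (f y - f x)) / G.m x

/-- The weighted vertex degree. -/
noncomputable def deg (x : V) : ℝ := (∑ᶠ y, G.w x y) / G.m x

/-- `f` is `1`-Lipschitz with respect to the combinatorial distance. -/
def Lip1 (f : V → ℝ) : Prop := ∀ x y, |f x - f y| ≤ (G.dist x y : ℝ)

/-- The Ollivier curvature, via the limit-free formula
`κ(x,y) = inf {∇_{xy} Δ f : f ∈ Lip(1) ∩ C_c(V), ∇_{yx} f = 1}`. -/
noncomputable def curv (x y : V) : ℝ :=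
  sInf { c | ∃ f : V → ℝ, G.Lip1 f ∧ (Function.support f).Finite ∧
    f y - f x = (G.dist x y : ℝ) ∧ c = (G.lap f x - G.lap f y) / (G.dist x y : ℝ) }

end WeightedGraph

/-!
For every `f`, `Δf(x) + Deg(x) = (1/m(x)) Σ_z w(x,z) (f(z) - f(x) + 1)`. If `f` is 1-Lipschitz with
`f(y) - f(x) = 1`, every summand is nonnegative and the one at `z = y` equals `2 w(x,y)`; the same
estimate for `-f` at `y` then bounds `Δf(x) - Δf(y)`, hence the curvature, from below by the claimed
value. The bound is attained by the potential that is `0` at `x`, `1` at `y`, `-1` on the other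
neighbours of `x` and `(3 - d(y,·))⁺` elsewhere: the absence of 3-, 4- and 5-cycles through `xy` is
exactly what makes it 1-Lipschitz.
-/

namespace SimpleGraph

variable {V : Type} (H : SimpleGraph V)

def NoCycle3Through (x y : V) : Prop :=
  ¬ ∃ z, z ≠ x ∧ z ≠ y ∧ H.Adj x z ∧ H.Adj z y

def NoCycle4Through (x y : V) : Prop :=
  ¬ ∃ z₁ z₂, z₁ ≠ x ∧ z₁ ≠ y ∧ z₂ ≠ x ∧ z₂ ≠ y ∧ z₁ ≠ z₂ ∧
    H.Adj x z₁ ∧ H.Adj z₁ z₂ ∧ H.Adj z₂ y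

def NoCycle5Through (x y : V) : Prop :=
  ¬ ∃ z₁ z₂ z₃, z₁ ≠ x ∧ z₁ ≠ y ∧ z₂ ≠ x ∧ z₂ ≠ y ∧ z₃ ≠ x ∧ z₃ ≠ y ∧
    z₁ ≠ z₂ ∧ z₁ ≠ z₃ ∧ z₂ ≠ z₃ ∧ H.Adj x z₁ ∧ H.Adj z₁ z₂ ∧ H.Adj z₂ z₃ ∧ H.Adj z₃ y

-- The last branch is `(3 - d(y, z))⁺`, by truncated subtraction in `ℕ`.
noncomputable def curvatureWitness (x y z : V) : ℝ :=
  open Classical in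
  if z = x then 0 else if z = y then 1 else if H.Adj x z then -1 else ((3 - H.dist y z : ℕ) : ℝ)

variable {H} {x y z u v : V}

theorem curvatureWitness_left : H.curvatureWitness x y x = 0 := by
  simp [curvatureWitness]

theorem curvatureWitness_right (hxy : x ≠ y) : H.curvatureWitness x y y = 1 := by
  simp [curvatureWitness, hxy.symm]

theorem curvatureWitness_of_adj_left (hzy : z ≠ y) (hxz : H.Adj x z) :
    H.curvatureWitness x y z = -1 := by
  simp [curvatureWitness, hxz.ne', hzy, hxz]

theorem curvatureWitness_of_not_adj_left (hzx : z ≠ x) (hzy : z ≠ y) (hxz : ¬ H.Adj x z) :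
    H.curvatureWitness x y z = ((3 - H.dist y z : ℕ) : ℝ) := by
  simp [curvatureWitness, hzx, hzy, hxz]

theorem neg_one_le_curvatureWitness : -1 ≤ H.curvatureWitness x y z := by
  unfold curvatureWitness
  split_ifs <;> linarith [(Nat.cast_nonneg _ : (0 : ℝ) ≤ ((3 - H.dist y z : ℕ) : ℝ))]

theorem curvatureWitness_nonneg (hxz : H.Adj x z → z = y) : 0 ≤ H.curvatureWitness x y z := by
  unfold curvatureWitness
  split_ifs with _ hzy hxz'
  · rfl
  · exact zero_le_one
  · exact absurd (hxz hxz') hzy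
  · exact Nat.cast_nonneg _

theorem curvatureWitness_of_adj_right (h3 : H.NoCycle3Through x y) (hzx : z ≠ x)
    (hyz : H.Adj y z) : H.curvatureWitness x y z = 2 := by
  have hxz : ¬ H.Adj x z := fun hxz => h3 ⟨z, hzx, hyz.ne', hxz, hyz.symm⟩
  rw [curvatureWitness_of_not_adj_left hzx hyz.ne' hxz, dist_eq_one_iff_adj.mpr hyz]
  norm_num

theorem one_le_curvatureWitness_of_adj (h4 : H.NoCycle4Through x y) (hux : u ≠ x)
    (hxu : ¬ H.Adj x u) (hyu : H.Adj y u) (huv : H.Adj u v) : 1 ≤ H.curvatureWitness x y v := by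
  have hvx : v ≠ x := by rintro rfl; exact hxu huv.symm
  by_cases hvy : v = y
  · rw [hvy, curvatureWitness_right (by rintro rfl; exact hxu hyu)]
  by_cases hxv : H.Adj x v
  · exact absurd ⟨v, u, hvx, hvy, hux, hyu.ne', huv.ne', hxv, huv.symm, hyu.symm⟩ h4
  rw [curvatureWitness_of_not_adj_left hvx hvy hxv]
  have hdist : H.dist y v ≤ 2 := by
    have := dist_eq_one_iff_adj.mpr hyu
    rcases huv.diff_dist_adj (u := y) with h | h | h <;> omega
  exact_mod_cast (by omega : 1 ≤ 3 - H.dist y v)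

theorem curvatureWitness_nonneg_of_adj (h3 : H.NoCycle3Through x y)
    (h5 : H.NoCycle5Through x y) (hux : u ≠ x) (hxu : ¬ H.Adj x u) (hyu : H.dist y u = 2)
    (huv : H.Adj u v) : 0 ≤ H.curvatureWitness x y v := by
  by_cases hxv : H.Adj x v → v = y
  · exact curvatureWitness_nonneg hxv
  obtain ⟨hxv, hvy⟩ := Classical.not_imp.mp hxv
  have hreach : H.Reachable y u := Reachable.of_dist_ne_zero (by omega)
  obtain ⟨w, hw⟩ := (edist_eq_two_iff.mp (by rw [← hreach.coe_dist_eq_edist, hyu]; rfl)).2.2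
  obtain ⟨hyw, huw⟩ := H.mem_commonNeighbors.mp hw
  have hvx : v ≠ x := hxv.ne'
  have huy : u ≠ y := by rintro rfl; simp at hyu
  have hwx : w ≠ x := by rintro rfl; exact hxu huw.symm
  have hvw : v ≠ w := by rintro rfl; exact h3 ⟨v, hvx, hvy, hxv, hyw.symm⟩
  exact absurd ⟨v, u, w, hvx, hvy, hux, huy, hwx, hyw.ne', huv.ne', hvw, huw.ne,
    hxv, huv.symm, huw, hyw.symm⟩ h5

theorem curvatureWitness_sub_le_one (hconn : H.Connected) (hxy : x ≠ y)
    (h3 : H.NoCycle3Through x y) (h4 : H.NoCycle4Through x y) (h5 : H.NoCycle5Through x y)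
    (huv : H.Adj u v) : H.curvatureWitness x y u - H.curvatureWitness x y v ≤ 1 := by
  have hv := neg_one_le_curvatureWitness (H := H) (x := x) (y := y) (z := v)
  by_cases hux : u = x
  · rw [hux, curvatureWitness_left]
    linarith
  by_cases huy : u = y
  · subst huy
    have hv0 : 0 ≤ H.curvatureWitness x u v :=
      curvatureWitness_nonneg fun hxv => absurd ⟨v, hxv.ne', huv.ne', hxv, huv.symm⟩ h3
    rw [curvatureWitness_right hxy]
    linarith
  by_cases hxu : H.Adj x u
  · rw [curvatureWitness_of_adj_left huy hxu]
    linarith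
  rw [curvatureWitness_of_not_adj_left hux huy hxu]
  have hpos : 0 < H.dist y u := hconn.pos_dist_of_ne (Ne.symm huy)
  obtain hd | hd | hd : H.dist y u = 1 ∨ H.dist y u = 2 ∨ 3 ≤ H.dist y u := by omega
  · have hv1 := one_le_curvatureWitness_of_adj h4 hux hxu (dist_eq_one_iff_adj.mp hd) huv
    have hu2 : ((3 - H.dist y u : ℕ) : ℝ) = 2 := by rw [hd]; norm_num
    linarith
  · have hv0 := curvatureWitness_nonneg_of_adj h3 h5 hux hxu hd huv
    have hu1 : ((3 - H.dist y u : ℕ) : ℝ) = 1 := by rw [hd]; norm_num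
    linarith
  · rw [Nat.sub_eq_zero_of_le hd, Nat.cast_zero]
    linarith

theorem abs_curvatureWitness_sub_le_one (hconn : H.Connected) (hxy : x ≠ y)
    (h3 : H.NoCycle3Through x y) (h4 : H.NoCycle4Through x y) (h5 : H.NoCycle5Through x y)
    (huv : H.Adj u v) : |H.curvatureWitness x y u - H.curvatureWitness x y v| ≤ 1 :=
  abs_sub_le_iff.mpr ⟨curvatureWitness_sub_le_one hconn hxy h3 h4 h5 huv,
    curvatureWitness_sub_le_one hconn hxy h3 h4 h5 huv.symm⟩

theorem support_curvatureWitness_subset :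
    Function.support (H.curvatureWitness x y) ⊆ H.neighborSet x ∪ {z | H.dist y z ≤ 2} := by
  intro z hz
  by_cases hzx : z = x
  · exact absurd (hzx ▸ curvatureWitness_left) hz
  by_cases hzy : z = y
  · right; simp [hzy]
  by_cases hxz : H.Adj x z
  · exact Or.inl hxz
  right
  rw [Function.mem_support, curvatureWitness_of_not_adj_left hzx hzy hxz] at hz
  have : 3 - H.dist y z ≠ 0 := by exact_mod_cast hz
  exact (by omega : H.dist y z ≤ 2)

theorem abs_sub_le_length_of_forall_adj {f : V → ℝ} (hf : ∀ u v, H.Adj u v → |f u - f v| ≤ 1) :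
    ∀ {u v : V} (p : H.Walk u v), |f u - f v| ≤ p.length
  | _, _, .nil => by simp
  | a, b, .cons (v := c) hac p => by
    rw [Walk.length_cons, Nat.cast_succ]
    linarith [abs_sub_le (f a) (f c) (f b), hf _ _ hac, abs_sub_le_length_of_forall_adj hf p]

end SimpleGraph

namespace WeightedGraph

variable {V : Type} (G : WeightedGraph V)

theorem finite_support_w_mul (x : V) (g : V → ℝ) :
    (Function.support fun z => G.w x z * g z).Finite :=
  (G.locFin x).subset fun _ hz => left_ne_zero_of_mul hz

theorem adj_of_w_ne_zero {x z : V} (h : G.w x z ≠ 0) : G.toSimple.Adj x z :=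
  ⟨fun e => h (e ▸ G.loopless x), h⟩

theorem lip1_of_forall_adj (hconn : G.toSimple.Connected) {f : V → ℝ}
    (hf : ∀ u v, G.toSimple.Adj u v → |f u - f v| ≤ 1) : G.Lip1 f := fun u v => by
  obtain ⟨p, hp⟩ := hconn.exists_walk_length_eq_dist u v
  rw [dist, ← hp]
  exact SimpleGraph.abs_sub_le_length_of_forall_adj hf p

theorem finite_setOf_dist_le (hconn : G.toSimple.Connected) (y : V) (n : ℕ) :
    {z | G.toSimple.dist y z ≤ n}.Finite := by
  induction n with
  | zero =>
    refine (Set.finite_singleton y).subset fun z hz => ?_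
    exact ((hconn.dist_eq_zero_iff).mp (Nat.le_zero.mp hz)).symm
  | succ n ih =>
    refine ((ih.biUnion fun v _ => G.locFin v).union ih).subset fun z hz => ?_
    obtain ⟨p, hp⟩ := hconn.exists_walk_length_eq_dist z y
    cases p with
    | nil => exact Or.inr (by simp)
    | cons hzv p =>
      refine Or.inl (Set.mem_biUnion (?_ : G.toSimple.dist y _ ≤ n) hzv.symm.2)
      change G.toSimple.dist y z ≤ n + 1 at hz
      rw [SimpleGraph.dist_comm] at hz ⊢
      rw [SimpleGraph.Walk.length_cons] at hp
      have hvy := SimpleGraph.dist_le p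
      omega

theorem lap_add_deg (f : V → ℝ) (x : V) :
    G.lap f x + G.deg x = (∑ᶠ z, G.w x z * (f z - f x + 1)) / G.m x := by
  rw [lap, deg, ← add_div, ← finsum_add_distrib (G.finite_support_w_mul x _) (G.locFin x)]
  simp only [mul_add, mul_one]

theorem lap_neg (f : V → ℝ) (x : V) : G.lap (-f) x = -G.lap f x := by
  rw [lap, lap, ← neg_div, ← finsum_neg_distrib]
  congr 1
  exact finsum_congr fun z => by simp only [Pi.neg_apply]; ring

theorem lip1_neg {f : V → ℝ} (hf : G.Lip1 f) : G.Lip1 (-f) := fun u v => by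
  simpa only [Pi.neg_apply, neg_sub_neg, abs_sub_comm] using hf u v

theorem two_mul_w_div_le_lap_add_deg {f : V → ℝ} (hf : G.Lip1 f) {x y : V}
    (hxy : f y - f x = 1) : 2 * G.w x y / G.m x ≤ G.lap f x + G.deg x := by
  rw [lap_add_deg]
  gcongr
  · exact (G.mpos x).le
  have hterm : ∀ z, 0 ≤ G.w x z * (f z - f x + 1) := by
    intro z
    by_cases hz : G.w x z = 0
    · simp [hz]
    have hlip := hf x z
    rw [dist, SimpleGraph.dist_eq_one_iff_adj.mpr (G.adj_of_w_ne_zero hz), Nat.cast_one] at hlip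
    exact mul_nonneg (G.nonneg x z) (by linarith [abs_le.mp hlip])
  calc 2 * G.w x y = G.w x y * (f y - f x + 1) := by rw [hxy]; ring
    _ ≤ _ := single_le_finsum y (G.finite_support_w_mul x _) hterm

theorem lap_add_deg_eq {f : V → ℝ} {x y : V} (hxy : f y - f x = 1)
    (hf : ∀ z ≠ y, G.w x z ≠ 0 → f z - f x = -1) :
    G.lap f x + G.deg x = 2 * G.w x y / G.m x := by
  rw [lap_add_deg, finsum_eq_single _ y, hxy]
  · ring
  intro z hz
  by_cases hw : G.w x z = 0
  · rw [hw, zero_mul]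
  · rw [hf z hz hw]; ring

theorem le_lap_sub_lap {f : V → ℝ} (hf : G.Lip1 f) {x y : V} (hxy : f y - f x = 1) :
    2 * G.w x y * (1 / G.m x + 1 / G.m y) - G.deg x - G.deg y ≤ G.lap f x - G.lap f y := by
  have hx := G.two_mul_w_div_le_lap_add_deg hf hxy
  have hy := G.two_mul_w_div_le_lap_add_deg (G.lip1_neg hf) (x := y) (y := x)
    (by simp only [Pi.neg_apply]; linarith)
  rw [lap_neg, G.symm y x] at hy
  have hsplit : 2 * G.w x y * (1 / G.m x + 1 / G.m y) =
      2 * G.w x y / G.m x + 2 * G.w x y / G.m y := by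
    ring
  linarith

theorem lap_sub_lap_eq {f : V → ℝ} {x y : V} (hxy : f y - f x = 1)
    (hx : ∀ z ≠ y, G.w x z ≠ 0 → f z - f x = -1) (hy : ∀ z ≠ x, G.w y z ≠ 0 → f z - f y = 1) :
    G.lap f x - G.lap f y = 2 * G.w x y * (1 / G.m x + 1 / G.m y) - G.deg x - G.deg y := by
  have hx' := G.lap_add_deg_eq hxy hx
  have hy' := G.lap_add_deg_eq (f := -f) (x := y) (y := x) (by simp only [Pi.neg_apply]; linarith)
    fun z hz hw => by simp only [Pi.neg_apply]; linarith [hy z hz hw]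
  rw [lap_neg, G.symm y x] at hy'
  linear_combination hx' + hy'

theorem curv_eq_of_lap_sub_lap_eq {x y : V} (hadj : G.toSimple.Adj x y) {f : V → ℝ}
    (hf : G.Lip1 f) (hsupp : (Function.support f).Finite) (hxy : f y - f x = 1)
    (heq : G.lap f x - G.lap f y = 2 * G.w x y * (1 / G.m x + 1 / G.m y) - G.deg x - G.deg y) :
    G.curv x y = 2 * G.w x y * (1 / G.m x + 1 / G.m y) - G.deg x - G.deg y := by
  have hdist : (G.dist x y : ℝ) = 1 := by
    rw [dist, SimpleGraph.dist_eq_one_iff_adj.mpr hadj, Nat.cast_one]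
  refine IsLeast.csInf_eq ⟨⟨f, hf, hsupp, by rw [hdist, hxy], by rw [hdist, div_one, heq]⟩, ?_⟩
  rintro c ⟨g, hg, -, hgxy, rfl⟩
  rw [hdist] at hgxy ⊢
  rw [div_one]
  exact G.le_lap_sub_lap hg hgxy

end WeightedGraph

theorem stmt2_general {V : Type} (G : WeightedGraph V)
    (hconn : G.toSimple.Connected) (x y : V) (hadj : G.toSimple.Adj x y)
    (h3 : ¬ ∃ z, z ≠ x ∧ z ≠ y ∧ G.toSimple.Adj x z ∧ G.toSimple.Adj z y)
    (h4 : ¬ ∃ z₁ z₂, z₁ ≠ x ∧ z₁ ≠ y ∧ z₂ ≠ x ∧ z₂ ≠ y ∧ z₁ ≠ z₂ ∧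
      G.toSimple.Adj x z₁ ∧ G.toSimple.Adj z₁ z₂ ∧ G.toSimple.Adj z₂ y)
    (h5 : ¬ ∃ z₁ z₂ z₃, z₁ ≠ x ∧ z₁ ≠ y ∧ z₂ ≠ x ∧ z₂ ≠ y ∧ z₃ ≠ x ∧ z₃ ≠ y ∧
      z₁ ≠ z₂ ∧ z₁ ≠ z₃ ∧ z₂ ≠ z₃ ∧
      G.toSimple.Adj x z₁ ∧ G.toSimple.Adj z₁ z₂ ∧ G.toSimple.Adj z₂ z₃ ∧
      G.toSimple.Adj z₃ y) :
    G.curv x y = 2 * G.w x y * (1 / G.m x + 1 / G.m y) - G.deg x - G.deg y := by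
  have hxy : G.toSimple.curvatureWitness x y y - G.toSimple.curvatureWitness x y x = 1 := by
    rw [SimpleGraph.curvatureWitness_right hadj.ne, SimpleGraph.curvatureWitness_left, sub_zero]
  have hlip : G.Lip1 (G.toSimple.curvatureWitness x y) :=
    G.lip1_of_forall_adj hconn fun _ _ =>
      SimpleGraph.abs_curvatureWitness_sub_le_one hconn hadj.ne h3 h4 h5
  have hsupp : (Function.support (G.toSimple.curvatureWitness x y)).Finite :=
    ((G.locFin x).union (G.finite_setOf_dist_le hconn y 2)).subset
      (SimpleGraph.support_curvatureWitness_subset.trans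
        (Set.union_subset_union_left _ fun _ hz => hz.2))
  refine G.curv_eq_of_lap_sub_lap_eq hadj hlip hsupp hxy (G.lap_sub_lap_eq hxy ?_ ?_)
  · intro z hzy hw
    rw [SimpleGraph.curvatureWitness_of_adj_left hzy (G.adj_of_w_ne_zero hw),
      SimpleGraph.curvatureWitness_left, sub_zero]
  · intro z hzx hw
    rw [SimpleGraph.curvatureWitness_of_adj_right h3 hzx (G.adj_of_w_ne_zero hw),
      SimpleGraph.curvatureWitness_right hadj.ne]
    norm_num

/-- If the edge `(x,y)` is contained in no 3-, 4- or 5-cycle, then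
`κ(x,y) = 2 w(x,y)(1/m(x) + 1/m(y)) - Deg(x) - Deg(y)`. -/
theorem stmt2 {V : Type} [Countable V] (G : WeightedGraph V)
    (hconn : G.toSimple.Connected) (x y : V) (hadj : G.toSimple.Adj x y)
    (h3 : ¬ ∃ z, z ≠ x ∧ z ≠ y ∧ G.toSimple.Adj x z ∧ G.toSimple.Adj z y)
    (h4 : ¬ ∃ z₁ z₂, z₁ ≠ x ∧ z₁ ≠ y ∧ z₂ ≠ x ∧ z₂ ≠ y ∧ z₁ ≠ z₂ ∧
      G.toSimple.Adj x z₁ ∧ G.toSimple.Adj z₁ z₂ ∧ G.toSimple.Adj z₂ y)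
    (h5 : ¬ ∃ z₁ z₂ z₃, z₁ ≠ x ∧ z₁ ≠ y ∧ z₂ ≠ x ∧ z₂ ≠ y ∧ z₃ ≠ x ∧ z₃ ≠ y ∧
      z₁ ≠ z₂ ∧ z₁ ≠ z₃ ∧ z₂ ≠ z₃ ∧
      G.toSimple.Adj x z₁ ∧ G.toSimple.Adj z₁ z₂ ∧ G.toSimple.Adj z₂ z₃ ∧
      G.toSimple.Adj z₃ y) :
    G.curv x y = 2 * G.w x y * (1 / G.m x + 1 / G.m y) - G.deg x - G.deg y :=
  stmt2_general G hconn x y hadj h3 h4 h5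
end

section
/- Let G be a locally finite weighted graph, φ:V→[0,∞) non-negative and finitely supported, and for f with 0 ≤ f ≤ φ define Q_t^φ f := (P_t f) ∧ φ and P_t^φ f := inf over all decompositions t₁+…+t_n = t of Q_{t₁}^φ ⋯ Q_{t_n}^φ f, where P_t is the heat semigroup. Then P_t^φ is a semigroup: P_t^φ P_s^φ f = P_{t+s}^φ f for all s,t ≥ 0 and all f ∈ [0,φ]. -/
/-!
Cutting a time step into two pieces can only lower the iterated cutoff, because
`Q_a^φ Q_b^φ ≤ Q_{a+b}^φ`. Hence `P_t^φ P_s^φ ≤ P_{t+s}^φ` by splitting a decomposition of `t + s`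
at `t`. Conversely, two decompositions of `s` have a common refinement lying below both, so, `φ`
having finite support, a single decomposition of `s` approximates `P_s^φ f` within `ε` everywhere;
an error `ε` in the datum survives every `Q_τ^φ` unchanged because `P_τ (g + ε) ≤ P_τ g + ε`, and
concatenating gives `P_{t+s}^φ f ≤ P_t^φ P_s^φ f + ε`.

The properties of the minimal heat semigroup needed for this (monotonicity, `P_t P_s ≤ P_{t+s}`,
`P_τ (g + ε) ≤ P_τ g + ε`) all follow from the comparison principle: the increasing limit of the
Picard iterates of Duhamel's formula is a solution with datum `f` lying below every solution whose
datum dominates `f`, so by minimality `P_t f` lies below it as well.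
-/

open scoped BigOperators

/-- `u` is a non-negative bounded solution of the heat equation with initial datum `f`. -/
def IsHeatSolution {V : Type} (G : WeightedGraph V) (f : V → ℝ) (u : ℝ → V → ℝ) : Prop :=
  u 0 = f ∧ (∀ t x, 0 ≤ t → 0 ≤ u t x) ∧ (∃ C, ∀ t x, 0 ≤ t → u t x ≤ C) ∧
  ∀ x t, 0 ≤ t → HasDerivWithinAt (fun s => u s x) (G.lap (u t) x) (Set.Ici 0) t

/-- `P` is the minimal heat semigroup: for every non-negative bounded `f`, `t ↦ P t f` is the
smallest non-negative bounded solution of the heat equation with initial datum `f`; on signed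
bounded functions it is given by linearity from the positive and negative parts. -/
def IsHeatSemigroup {V : Type} (G : WeightedGraph V) (P : ℝ → (V → ℝ) → V → ℝ) : Prop :=
  (∀ f : V → ℝ, (∀ x, 0 ≤ f x) → (∃ C, ∀ x, f x ≤ C) →
    IsHeatSolution G f (fun t => P t f) ∧
    ∀ u, IsHeatSolution G f u → ∀ t x, 0 ≤ t → P t f x ≤ u t x) ∧
  (∀ f : V → ℝ, (∃ C, ∀ x, |f x| ≤ C) → ∀ t x,
    P t f x = P t (fun y => max (f y) 0) x - P t (fun y => max (-f y) 0) x)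

/-- The one-step cutoff operator `Q_t^φ f := (P_t f) ∧ φ`. -/
noncomputable def Qcut {V : Type} (G : WeightedGraph V) (P : ℝ → (V → ℝ) → V → ℝ)
    (φ : V → ℝ) (t : ℝ) (f : V → ℝ) : V → ℝ :=
  fun x => min (P t f x) (φ x)

/-- The cutoff semigroup `P_t^φ f := inf_{t₁+⋯+t_n = t} Q_{t₁}^φ ⋯ Q_{t_n}^φ f`. -/
noncomputable def Pcut {V : Type} (G : WeightedGraph V) (P : ℝ → (V → ℝ) → V → ℝ)
    (φ : V → ℝ) (t : ℝ) (f : V → ℝ) (x : V) : ℝ :=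
  sInf { c | ∃ l : List ℝ, (∀ s ∈ l, 0 ≤ s) ∧ l.sum = t ∧
    c = (l.foldr (fun s g => Qcut G P φ s g) f) x }

open Set Filter Topology MeasureTheory Real

namespace WeightedGraph

variable {V : Type} (G : WeightedGraph V)

noncomputable def nbrs (x : V) : Finset V := (G.locFin x).toFinset

noncomputable def adjOp (h : V → ℝ) (x : V) : ℝ := (∑ y ∈ G.nbrs x, G.w x y * h y) / G.m x

lemma finsum_eq_sum_nbrs {x : V} {g : V → ℝ} (hg : ∀ y, G.w x y = 0 → g y = 0) :
    ∑ᶠ y, g y = ∑ y ∈ G.nbrs x, g y :=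
  finsum_eq_sum_of_support_subset _ fun y hy => by
    simpa [nbrs] using mt (hg y) hy

lemma deg_eq_adjOp_one (x : V) : G.deg x = G.adjOp 1 x := by
  simp [deg, adjOp, G.finsum_eq_sum_nbrs (g := G.w x) fun _ => id]

lemma lap_eq_adjOp_sub (h : V → ℝ) (x : V) : G.lap h x = G.adjOp h x - G.deg x * h x := by
  rw [lap, G.finsum_eq_sum_nbrs fun y hy => by rw [hy, zero_mul], deg_eq_adjOp_one, adjOp, adjOp]
  simp only [mul_sub, Finset.sum_sub_distrib, ← Finset.sum_mul, Pi.one_apply, mul_one]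
  ring

lemma lap_add_const (h : V → ℝ) (c : ℝ) : G.lap (fun y => h y + c) = G.lap h := by
  ext x
  simp [lap]

lemma adjOp_mono : Monotone G.adjOp := fun _ _ hle x =>
  div_le_div_of_nonneg_right
    (Finset.sum_le_sum fun y _ => mul_le_mul_of_nonneg_left (hle y) (G.nonneg x y)) (G.mpos x).le

lemma adjOp_const (c : ℝ) (x : V) : G.adjOp (fun _ => c) x = G.deg x * c := by
  simp [deg_eq_adjOp_one, adjOp, ← Finset.sum_mul, div_mul_eq_mul_div]

lemma adjOp_zero (x : V) : G.adjOp 0 x = 0 :=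
  (G.adjOp_const 0 x).trans (mul_zero _)

lemma adjOp_nonneg {h : V → ℝ} (hh : 0 ≤ h) (x : V) : 0 ≤ G.adjOp h x :=
  G.adjOp_zero x ▸ G.adjOp_mono hh x

lemma adjOp_le_deg_mul {h : V → ℝ} {C : ℝ} (hC : ∀ y, h y ≤ C) (x : V) :
    G.adjOp h x ≤ G.deg x * C :=
  G.adjOp_const C x ▸ G.adjOp_mono hC x

lemma deg_nonneg (x : V) : 0 ≤ G.deg x := by
  simpa [adjOp_zero, deg_eq_adjOp_one] using G.adjOp_mono (zero_le_one : (0 : V → ℝ) ≤ 1) x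

lemma intervalIntegrable_adjOp {v : ℝ → V → ℝ} {a b : ℝ}
    (hv : ∀ y, IntervalIntegrable (fun τ => v τ y) volume a b) (x : V) :
    IntervalIntegrable (fun τ => G.adjOp (v τ) x) volume a b := by
  have := IntervalIntegrable.sum (G.nbrs x) fun y _ => (hv y).const_mul (G.w x y)
  simpa only [adjOp, Finset.sum_fn] using this.div_const (G.m x)

lemma continuous_adjOp {v : ℝ → V → ℝ} (hv : ∀ y, Continuous fun τ => v τ y) (x : V) :
    Continuous fun τ => G.adjOp (v τ) x :=
  (continuous_finsetSum _ fun y _ => continuous_const.mul (hv y)).div_const _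

lemma tendsto_adjOp {ι : Type*} {l : Filter ι} {v : ι → V → ℝ} {h : V → ℝ}
    (hv : ∀ y, Tendsto (fun n => v n y) l (𝓝 (h y))) (x : V) :
    Tendsto (fun n => G.adjOp (v n) x) l (𝓝 (G.adjOp h x)) :=
  (tendsto_finsetSum _ fun y _ => (hv y).const_mul _).div_const _

/-- Variation of constants for `∂ₜu = adjOp u - deg · u`, which is the heat equation by
`lap_eq_adjOp_sub`. -/
noncomputable def duhamel (f : V → ℝ) (v : ℝ → V → ℝ) (t : ℝ) (x : V) : ℝ :=
  exp (-(G.deg x * t)) * (f x + ∫ τ in (0)..t, exp (G.deg x * τ) * G.adjOp (v τ) x)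

lemma duhamel_zero (f : V → ℝ) (v : ℝ → V → ℝ) : G.duhamel f v 0 = f := by
  ext x
  simp [duhamel]

lemma intervalIntegrable_duhamel_integrand {v : ℝ → V → ℝ} {a b : ℝ}
    (hv : ∀ y, IntervalIntegrable (fun τ => v τ y) volume a b) (x : V) :
    IntervalIntegrable (fun τ => exp (G.deg x * τ) * G.adjOp (v τ) x) volume a b :=
  (G.intervalIntegrable_adjOp hv x).continuousOn_mul (by fun_prop)

lemma norm_duhamel_integrand_le {v : ℝ → V → ℝ} {C τ t : ℝ} (hτt : τ ≤ t) (hv : 0 ≤ v τ)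
    (hC : ∀ y, v τ y ≤ C) (x : V) :
    ‖exp (G.deg x * τ) * G.adjOp (v τ) x‖ ≤ exp (G.deg x * t) * (G.deg x * C) := by
  rw [Real.norm_eq_abs, abs_of_nonneg (mul_nonneg (exp_pos _).le (G.adjOp_nonneg hv x))]
  exact mul_le_mul (exp_le_exp.2 (mul_le_mul_of_nonneg_left hτt (G.deg_nonneg x)))
    (G.adjOp_le_deg_mul hC x) (G.adjOp_nonneg hv x) (exp_pos _).le

lemma continuous_duhamel (f : V → ℝ) {v : ℝ → V → ℝ}
    (hv : ∀ y a b, IntervalIntegrable (fun τ => v τ y) volume a b) (x : V) :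
    Continuous fun t => G.duhamel f v t x := by
  have := intervalIntegral.continuous_primitive
    (fun a b => G.intervalIntegrable_duhamel_integrand (fun y => hv y a b) x) 0
  unfold duhamel
  fun_prop

lemma hasDerivAt_duhamel (f : V → ℝ) {v : ℝ → V → ℝ} (hv : ∀ y, Continuous fun τ => v τ y)
    (x : V) (t : ℝ) :
    HasDerivAt (fun t => G.duhamel f v t x)
      (G.adjOp (v t) x - G.deg x * G.duhamel f v t x) t := by
  have hcont : Continuous fun τ => exp (G.deg x * τ) * G.adjOp (v τ) x := by
    have := G.continuous_adjOp hv x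
    fun_prop
  have hint := (hcont.integral_hasStrictDerivAt 0 t).hasDerivAt
  have hexp : HasDerivAt (fun t => exp (-(G.deg x * t))) (exp (-(G.deg x * t)) * -G.deg x) t := by
    simpa using ((hasDerivAt_id t).const_mul (G.deg x)).neg.exp
  have hinv : exp (-(G.deg x * t)) * exp (G.deg x * t) = 1 := by
    rw [← exp_add, neg_add_cancel, exp_zero]
  refine (hexp.mul ((hasDerivAt_const t (f x)).add hint)).congr_deriv ?_
  simp only [duhamel, Pi.add_apply]
  linear_combination G.adjOp (v t) x * hinv

lemma duhamel_mono {f f' : V → ℝ} {v v' : ℝ → V → ℝ} {t : ℝ} (ht : 0 ≤ t) (hf : f ≤ f')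
    (hv : ∀ y, IntervalIntegrable (fun τ => v τ y) volume 0 t)
    (hv' : ∀ y, IntervalIntegrable (fun τ => v' τ y) volume 0 t)
    (hvv' : ∀ τ ∈ Icc 0 t, v τ ≤ v' τ) (x : V) :
    G.duhamel f v t x ≤ G.duhamel f' v' t x := by
  refine mul_le_mul_of_nonneg_left (add_le_add (hf x) ?_) (exp_pos _).le
  exact intervalIntegral.integral_mono_on ht (G.intervalIntegrable_duhamel_integrand hv x)
    (G.intervalIntegrable_duhamel_integrand hv' x) fun τ hτ =>
      mul_le_mul_of_nonneg_left (G.adjOp_mono (hvv' τ hτ) x) (exp_pos _).le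

end WeightedGraph

namespace IsHeatSolution

variable {V : Type} {G : WeightedGraph V} {f : V → ℝ} {u : ℝ → V → ℝ}

lemma intervalIntegrable (hu : IsHeatSolution G f u) {t : ℝ} (ht : 0 ≤ t) (y : V) :
    IntervalIntegrable (fun τ => u τ y) volume 0 t :=
  ContinuousOn.intervalIntegrable_of_Icc ht fun τ hτ =>
    (hu.2.2.2 y τ hτ.1).continuousWithinAt.mono Icc_subset_Ici_self

lemma eq_duhamel (hu : IsHeatSolution G f u) {t : ℝ} (ht : 0 ≤ t) : u t = G.duhamel f u t := by
  ext x
  have hderiv : ∀ τ ∈ Ici (0 : ℝ), HasDerivWithinAt (fun τ => exp (G.deg x * τ) * u τ x)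
      (exp (G.deg x * τ) * G.adjOp (u τ) x) (Ici 0) τ := by
    intro τ hτ
    have hexp : HasDerivAt (fun τ => exp (G.deg x * τ)) (exp (G.deg x * τ) * G.deg x) τ := by
      simpa using ((hasDerivAt_id τ).const_mul (G.deg x)).exp
    refine (hexp.hasDerivWithinAt.mul (hu.2.2.2 x τ hτ)).congr_deriv ?_
    rw [G.lap_eq_adjOp_sub]
    ring
  have hFTC := intervalIntegral.integral_eq_sub_of_hasDeriv_right_of_le ht
    (fun τ hτ => (hderiv τ hτ.1).continuousWithinAt.mono Icc_subset_Ici_self)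
    (fun τ hτ => (hderiv τ hτ.1.le).mono (Ioi_subset_Ici hτ.1.le))
    (G.intervalIntegrable_duhamel_integrand (hu.intervalIntegrable ht) x)
  rw [WeightedGraph.duhamel, hFTC, congrFun hu.1 x, mul_zero, exp_zero, one_mul,
    add_sub_cancel, ← mul_assoc, ← exp_add, neg_add_cancel, exp_zero, one_mul]

end IsHeatSolution

namespace WeightedGraph

variable {V : Type} (G : WeightedGraph V)

lemma isHeatSolution_of_eq_duhamel {f : V → ℝ} {v : ℝ → V → ℝ}
    (hv : ∀ y, Continuous fun τ => v τ y) (hduh : ∀ t, 0 ≤ t → v t = G.duhamel f v t)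
    (hnonneg : ∀ t x, 0 ≤ t → 0 ≤ v t x) (hbdd : ∃ C, ∀ t x, 0 ≤ t → v t x ≤ C) :
    IsHeatSolution G f v := by
  refine ⟨by rw [hduh 0 le_rfl, duhamel_zero], hnonneg, hbdd, fun x t ht => ?_⟩
  have := (G.hasDerivAt_duhamel f hv x t).hasDerivWithinAt (s := Ici 0)
  rw [← congrFun (hduh t ht) x, ← lap_eq_adjOp_sub] at this
  exact this.congr (fun τ hτ => congrFun (hduh τ hτ) x) (congrFun (hduh t ht) x)

noncomputable def picard (f : V → ℝ) : ℕ → ℝ → V → ℝ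
  | 0 => 0
  | n + 1 => G.duhamel f (picard f n)

lemma continuous_picard (f : V → ℝ) (n : ℕ) (y : V) : Continuous fun t => G.picard f n t y := by
  induction n generalizing y with
  | zero => exact continuous_const
  | succ n ih => exact G.continuous_duhamel f (fun z a b => (ih z).intervalIntegrable a b) y

lemma intervalIntegrable_picard (f : V → ℝ) (n : ℕ) (y : V) (a b : ℝ) :
    IntervalIntegrable (fun τ => G.picard f n τ y) volume a b :=
  (G.continuous_picard f n y).intervalIntegrable a b

lemma picard_le_succ {f : V → ℝ} (hf : 0 ≤ f) (n : ℕ) {t : ℝ} (ht : 0 ≤ t) :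
    G.picard f n t ≤ G.picard f (n + 1) t := by
  induction n generalizing t with
  | zero =>
    intro x
    calc G.picard f 0 t x = G.duhamel 0 0 t x := by simp [picard, duhamel, adjOp_zero]
      _ ≤ G.picard f 1 t x := G.duhamel_mono ht hf (G.intervalIntegrable_picard f 0 · 0 t)
          (G.intervalIntegrable_picard f 0 · 0 t) (fun _ _ => le_rfl) x
  | succ n ih =>
    exact G.duhamel_mono ht le_rfl (G.intervalIntegrable_picard f n · 0 t)
      (G.intervalIntegrable_picard f (n + 1) · 0 t) fun τ hτ => ih hτ.1

lemma picard_nonneg {f : V → ℝ} (hf : 0 ≤ f) (n : ℕ) {t : ℝ} (ht : 0 ≤ t) :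
    0 ≤ G.picard f n t :=
  monotone_nat_of_le_succ (fun n => G.picard_le_succ hf n ht) (Nat.zero_le n)

lemma picard_le_of_isHeatSolution {f g : V → ℝ} {u : ℝ → V → ℝ} (hu : IsHeatSolution G g u)
    (hfg : f ≤ g) (n : ℕ) {t : ℝ} (ht : 0 ≤ t) : G.picard f n t ≤ u t := by
  induction n generalizing t with
  | zero => exact fun x => hu.2.1 t x ht
  | succ n ih =>
    rw [hu.eq_duhamel ht]
    exact G.duhamel_mono ht hfg (G.intervalIntegrable_picard f n · 0 t)
      (hu.intervalIntegrable ht) fun τ hτ => ih hτ.1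

/-- Evaluated at `max t 0` so that it is bounded and measurable on the whole real line. -/
noncomputable def picardLim (f : V → ℝ) (t : ℝ) (x : V) : ℝ := ⨆ n, G.picard f n (max t 0) x

section picardLim

variable {f : V → ℝ} {C : ℝ}

lemma bddAbove_picard (hC : ∀ n t x, 0 ≤ t → G.picard f n t x ≤ C) (t : ℝ) (x : V) :
    BddAbove (range fun n => G.picard f n (max t 0) x) :=
  ⟨C, forall_mem_range.2 fun n => hC n _ x (le_max_right t 0)⟩

lemma tendsto_picard (hf : 0 ≤ f) (hC : ∀ n t x, 0 ≤ t → G.picard f n t x ≤ C) {t : ℝ}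
    (ht : 0 ≤ t) (x : V) :
    Tendsto (fun n => G.picard f n t x) atTop (𝓝 (G.picardLim f t x)) := by
  have : Tendsto (fun n => G.picard f n (max t 0) x) atTop (𝓝 (G.picardLim f t x)) :=
    tendsto_atTop_ciSup (monotone_nat_of_le_succ fun n => G.picard_le_succ hf n
      (le_max_right t 0) x) (G.bddAbove_picard hC t x)
  rwa [max_eq_left ht] at this

lemma picardLim_nonneg (hC : ∀ n t x, 0 ≤ t → G.picard f n t x ≤ C) (t : ℝ) (x : V) :
    0 ≤ G.picardLim f t x :=
  le_ciSup_of_le (G.bddAbove_picard hC t x) 0 le_rfl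

lemma picardLim_le (hC : ∀ n t x, 0 ≤ t → G.picard f n t x ≤ C) (t : ℝ) (x : V) :
    G.picardLim f t x ≤ C :=
  ciSup_le fun n => hC n _ x (le_max_right t 0)

lemma intervalIntegrable_picardLim (hC : ∀ n t x, 0 ≤ t → G.picard f n t x ≤ C) (y : V)
    (a b : ℝ) : IntervalIntegrable (fun τ => G.picardLim f τ y) volume a b := by
  refine (intervalIntegrable_const (c := C)).mono_fun' ?_
    (Eventually.of_forall fun τ => ?_)
  · exact (Measurable.iSup fun n => (G.continuous_picard f n y).measurable.comp
      (measurable_id.max measurable_const)).aestronglyMeasurable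
  · show ‖_‖ ≤ C
    rw [Real.norm_eq_abs, abs_of_nonneg (G.picardLim_nonneg hC τ y)]
    exact G.picardLim_le hC τ y

lemma picardLim_eq_duhamel (hf : 0 ≤ f) (hC : ∀ n t x, 0 ≤ t → G.picard f n t x ≤ C) {t : ℝ}
    (ht : 0 ≤ t) : G.picardLim f t = G.duhamel f (G.picardLim f) t := by
  ext x
  have hint : Tendsto (fun n => ∫ τ in (0)..t, exp (G.deg x * τ) * G.adjOp (G.picard f n τ) x)
      atTop (𝓝 (∫ τ in (0)..t, exp (G.deg x * τ) * G.adjOp (G.picardLim f τ) x)) := by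
    refine intervalIntegral.tendsto_integral_filter_of_dominated_convergence
      (fun _ => exp (G.deg x * t) * (G.deg x * C))
      (Eventually.of_forall fun n => (G.intervalIntegrable_duhamel_integrand
        (G.intervalIntegrable_picard f n · 0 t) x).def'.aestronglyMeasurable)
      (Eventually.of_forall fun n => Eventually.of_forall fun τ hτ => ?_)
      intervalIntegrable_const (Eventually.of_forall fun τ hτ => ?_) <;>
      rw [uIoc_of_le ht] at hτ
    · exact G.norm_duhamel_integrand_le hτ.2 (G.picard_nonneg hf n hτ.1.le)
        (fun y => hC n τ y hτ.1.le) x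
    · exact (G.tendsto_adjOp (fun y => G.tendsto_picard hf hC hτ.1.le y) x).const_mul _
  exact tendsto_nhds_unique ((G.tendsto_picard hf hC ht x).comp (tendsto_add_atTop_nat 1))
    ((hint.const_add (f x)).const_mul _)

lemma isHeatSolution_picardLim (hf : 0 ≤ f) (hC : ∀ n t x, 0 ≤ t → G.picard f n t x ≤ C) :
    IsHeatSolution G f (G.picardLim f) := by
  have hmax : ∀ t, G.picardLim f t = G.duhamel f (G.picardLim f) (max t 0) := fun t => by
    rw [← G.picardLim_eq_duhamel hf hC (le_max_right t 0)]
    ext x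
    simp only [picardLim, max_eq_left (le_max_right t 0)]
  refine G.isHeatSolution_of_eq_duhamel (fun y => ?_)
    (fun t ht => G.picardLim_eq_duhamel hf hC ht)
    (fun t x _ => G.picardLim_nonneg hC t x) ⟨C, fun t x _ => G.picardLim_le hC t x⟩
  simp_rw [hmax]
  exact (G.continuous_duhamel f (G.intervalIntegrable_picardLim hC) y).comp
    (continuous_id.max continuous_const)

end picardLim

end WeightedGraph

theorem IsHeatSemigroup.le_of_isHeatSolution {V : Type} {G : WeightedGraph V}
    {P : ℝ → (V → ℝ) → V → ℝ} (hP : IsHeatSemigroup G P) {f g : V → ℝ} {u : ℝ → V → ℝ}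
    (hf : 0 ≤ f) (hu : IsHeatSolution G g u) (hfg : f ≤ g) {t : ℝ} (ht : 0 ≤ t) :
    P t f ≤ u t := by
  obtain ⟨C, hC⟩ := hu.2.2.1
  have hpicard : ∀ n t x, 0 ≤ t → G.picard f n t x ≤ C := fun n t x ht =>
    (G.picard_le_of_isHeatSolution hu hfg n ht x).trans (hC t x ht)
  have hfC : ∀ x, f x ≤ C := fun x => (hfg x).trans (hu.1 ▸ hC 0 x le_rfl)
  intro x
  calc P t f x ≤ G.picardLim f t x :=
        (hP.1 f hf ⟨C, hfC⟩).2 _ (G.isHeatSolution_picardLim hf hpicard) t x ht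
    _ ≤ u t x := by
      rw [WeightedGraph.picardLim, max_eq_left ht]
      exact ciSup_le fun n => G.picard_le_of_isHeatSolution hu hfg n ht x

namespace IsHeatSemigroup

variable {V : Type} {G : WeightedGraph V} {P : ℝ → (V → ℝ) → V → ℝ} {f g h : V → ℝ} {t : ℝ}

lemma isHeatSolution (hP : IsHeatSemigroup G P) (hf : 0 ≤ f) (hfb : ∃ C, ∀ x, f x ≤ C) :
    IsHeatSolution G f fun t => P t f :=
  (hP.1 f hf hfb).1

lemma nonneg (hP : IsHeatSemigroup G P) (hf : 0 ≤ f) (hfb : ∃ C, ∀ x, f x ≤ C) (ht : 0 ≤ t) :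
    0 ≤ P t f :=
  fun x => (hP.isHeatSolution hf hfb).2.1 t x ht

lemma apply_zero (hP : IsHeatSemigroup G P) (hf : 0 ≤ f) (hfb : ∃ C, ∀ x, f x ≤ C) : P 0 f = f :=
  (hP.isHeatSolution hf hfb).1

lemma mono (hP : IsHeatSemigroup G P) (hf : 0 ≤ f) (hg : 0 ≤ g) (hgb : ∃ C, ∀ x, g x ≤ C)
    (hfg : f ≤ g) (ht : 0 ≤ t) : P t f ≤ P t g :=
  hP.le_of_isHeatSolution hf (hP.isHeatSolution hg hgb) hfg ht

lemma le_add_of_le_add (hP : IsHeatSemigroup G P) (hg : 0 ≤ g) (hh : 0 ≤ h)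
    (hhb : ∃ C, ∀ x, h x ≤ C) {δ : ℝ} (hδ : 0 ≤ δ) (hgh : ∀ x, g x ≤ h x + δ) (ht : 0 ≤ t)
    (x : V) : P t g x ≤ P t h x + δ := by
  obtain ⟨h0, hnonneg, ⟨C, hC⟩, hderiv⟩ := hP.isHeatSolution hh hhb
  have hu : IsHeatSolution G (fun y => h y + δ) fun t y => P t h y + δ :=
    ⟨by simp only [h0], fun t y ht => add_nonneg (hnonneg t y ht) hδ,
      ⟨C + δ, fun t y ht => add_le_add_left (hC t y ht) δ⟩,
      fun y t ht => by simpa only [G.lap_add_const] using (hderiv y t ht).add_const δ⟩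
  exact hP.le_of_isHeatSolution hg hu hgh ht x

lemma comp_le (hP : IsHeatSemigroup G P) (hf : 0 ≤ f) (hfb : ∃ C, ∀ x, f x ≤ C) {s : ℝ}
    (hs : 0 ≤ s) (ht : 0 ≤ t) : P t (P s f) ≤ P (t + s) f := by
  obtain ⟨-, hnonneg, ⟨C, hC⟩, hderiv⟩ := hP.isHeatSolution hf hfb
  have hu : IsHeatSolution G (P s f) fun r => P (r + s) f :=
    ⟨by simp only [zero_add], fun r y hr => hnonneg _ y (add_nonneg hr hs),
      ⟨C, fun r y hr => hC _ y (add_nonneg hr hs)⟩, fun y r hr => by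
        simpa [Function.comp_def] using (hderiv y (r + s) (add_nonneg hr hs)).comp r
          (((hasDerivAt_id r).add_const s).hasDerivWithinAt (s := Ici 0))
          fun τ hτ => mem_Ici.2 (add_nonneg (mem_Ici.1 hτ) hs)⟩
  exact hP.le_of_isHeatSolution (hP.nonneg hf hfb hs) hu le_rfl ht

end IsHeatSemigroup

section Cutoff

variable {V : Type} {G : WeightedGraph V} {P : ℝ → (V → ℝ) → V → ℝ} {φ g h : V → ℝ} {C : ℝ}

lemma exists_forall_le_of_le (hφ : ∀ x, φ x ≤ C) (hg : g ≤ φ) : ∃ C, ∀ x, g x ≤ C :=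
  ⟨C, fun x => (hg x).trans (hφ x)⟩

lemma Qcut_mem_Icc (hP : IsHeatSemigroup G P) (hφ : ∀ x, φ x ≤ C) (hg : g ∈ Icc 0 φ) {t : ℝ}
    (ht : 0 ≤ t) : Qcut G P φ t g ∈ Icc 0 φ :=
  ⟨fun x => le_min (hP.nonneg hg.1 (exists_forall_le_of_le hφ hg.2) ht x) (hg.1.trans hg.2 x),
    fun _ => min_le_right _ _⟩

lemma Qcut_mono (hP : IsHeatSemigroup G P) (hφ : ∀ x, φ x ≤ C) (hg : g ∈ Icc 0 φ)
    (hh : h ∈ Icc 0 φ) (hgh : g ≤ h) {t : ℝ} (ht : 0 ≤ t) : Qcut G P φ t g ≤ Qcut G P φ t h :=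
  fun x => min_le_min_right _ (hP.mono hg.1 hh.1 (exists_forall_le_of_le hφ hh.2) hgh ht x)

lemma Qcut_zero (hP : IsHeatSemigroup G P) (hφ : ∀ x, φ x ≤ C) (hg : g ∈ Icc 0 φ) :
    Qcut G P φ 0 g = g := by
  ext x
  rw [Qcut, hP.apply_zero hg.1 (exists_forall_le_of_le hφ hg.2)]
  exact min_eq_left (hg.2 x)

lemma Qcut_comp_le (hP : IsHeatSemigroup G P) (hφ : ∀ x, φ x ≤ C) (hg : g ∈ Icc 0 φ)
    {a b : ℝ} (ha : 0 ≤ a) (hb : 0 ≤ b) :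
    Qcut G P φ a (Qcut G P φ b g) ≤ Qcut G P φ (a + b) g := by
  have hgb := exists_forall_le_of_le hφ hg.2
  obtain ⟨-, -, ⟨D, hD⟩, -⟩ := hP.isHeatSolution hg.1 hgb
  refine fun x => min_le_min_right _ (le_trans ?_ (hP.comp_le hg.1 hgb hb ha x))
  exact hP.mono (Qcut_mem_Icc hP hφ hg hb).1 (hP.nonneg hg.1 hgb hb) ⟨D, fun y => hD b y hb⟩
    (fun _ => min_le_left _ _) ha x

lemma Qcut_le_add (hP : IsHeatSemigroup G P) (hφ : ∀ x, φ x ≤ C) (hg : g ∈ Icc 0 φ)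
    (hh : h ∈ Icc 0 φ) {δ : ℝ} (hδ : 0 ≤ δ) (hgh : ∀ x, g x ≤ h x + δ) {t : ℝ} (ht : 0 ≤ t)
    (x : V) : Qcut G P φ t g x ≤ Qcut G P φ t h x + δ :=
  calc Qcut G P φ t g x ≤ min (P t h x + δ) (φ x + δ) :=
        min_le_min (hP.le_add_of_le_add hg.1 hh.1 (exists_forall_le_of_le hφ hh.2) hδ hgh ht x)
          (le_add_of_nonneg_right hδ)
    _ = Qcut G P φ t h x + δ := min_add_add_right _ _ _

end Cutoff

noncomputable def Qiter {V : Type} (G : WeightedGraph V) (P : ℝ → (V → ℝ) → V → ℝ) (φ : V → ℝ)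
    (l : List ℝ) (g : V → ℝ) : V → ℝ :=
  l.foldr (fun s g => Qcut G P φ s g) g

def QiterLE {V : Type} (G : WeightedGraph V) (P : ℝ → (V → ℝ) → V → ℝ) (φ : V → ℝ)
    (l l' : List ℝ) : Prop :=
  ∀ g ∈ Icc 0 φ, Qiter G P φ l g ≤ Qiter G P φ l' g

section Qiter

variable {V : Type} {G : WeightedGraph V} {P : ℝ → (V → ℝ) → V → ℝ} {φ g : V → ℝ} {C : ℝ}
  {l l' : List ℝ}

lemma Qiter_cons (s : ℝ) (l : List ℝ) (g : V → ℝ) :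
    Qiter G P φ (s :: l) g = Qcut G P φ s (Qiter G P φ l g) := rfl

lemma Qiter_append (l l' : List ℝ) (g : V → ℝ) :
    Qiter G P φ (l ++ l') g = Qiter G P φ l (Qiter G P φ l' g) :=
  List.foldr_append

lemma Qiter_mem_Icc (hP : IsHeatSemigroup G P) (hφ : ∀ x, φ x ≤ C) (hl : ∀ s ∈ l, 0 ≤ s)
    (hg : g ∈ Icc 0 φ) : Qiter G P φ l g ∈ Icc 0 φ := by
  induction l with
  | nil => exact hg
  | cons s l ih =>
    rw [List.forall_mem_cons] at hl
    exact Qcut_mem_Icc hP hφ (ih hl.2) hl.1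

lemma Qiter_mono (hP : IsHeatSemigroup G P) (hφ : ∀ x, φ x ≤ C) (hl : ∀ s ∈ l, 0 ≤ s)
    {h : V → ℝ} (hg : g ∈ Icc 0 φ) (hh : h ∈ Icc 0 φ) (hgh : g ≤ h) :
    Qiter G P φ l g ≤ Qiter G P φ l h := by
  induction l with
  | nil => exact hgh
  | cons s l ih =>
    rw [List.forall_mem_cons] at hl
    exact Qcut_mono hP hφ (Qiter_mem_Icc hP hφ hl.2 hg) (Qiter_mem_Icc hP hφ hl.2 hh) (ih hl.2)
      hl.1

lemma Qiter_le_add (hP : IsHeatSemigroup G P) (hφ : ∀ x, φ x ≤ C) (hl : ∀ s ∈ l, 0 ≤ s)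
    {h : V → ℝ} (hg : g ∈ Icc 0 φ) (hh : h ∈ Icc 0 φ) {δ : ℝ} (hδ : 0 ≤ δ)
    (hgh : ∀ x, g x ≤ h x + δ) (x : V) : Qiter G P φ l g x ≤ Qiter G P φ l h x + δ := by
  induction l generalizing x with
  | nil => exact hgh x
  | cons s l ih =>
    rw [List.forall_mem_cons] at hl
    exact Qcut_le_add hP hφ (Qiter_mem_Icc hP hφ hl.2 hg) (Qiter_mem_Icc hP hφ hl.2 hh) hδ
      (ih hl.2) hl.1 x

lemma Qiter_of_sum_eq_zero (hP : IsHeatSemigroup G P) (hφ : ∀ x, φ x ≤ C)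
    (hl : ∀ s ∈ l, 0 ≤ s) (hsum : l.sum = 0) (hg : g ∈ Icc 0 φ) : Qiter G P φ l g = g := by
  induction l with
  | nil => rfl
  | cons s l ih =>
    rw [List.forall_mem_cons] at hl
    rw [List.sum_cons] at hsum
    have hs : s = 0 := le_antisymm (by linarith [List.sum_nonneg hl.2]) hl.1
    rw [Qiter_cons, ih hl.2 (by linarith), hs, Qcut_zero hP hφ hg]

lemma QiterLE.trans {l'' : List ℝ} (h : QiterLE G P φ l l') (h' : QiterLE G P φ l' l'') :
    QiterLE G P φ l l'' :=
  fun g hg => (h g hg).trans (h' g hg)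

lemma QiterLE.cons (hP : IsHeatSemigroup G P) (hφ : ∀ x, φ x ≤ C) (hl : ∀ s ∈ l, 0 ≤ s)
    (hl' : ∀ s ∈ l', 0 ≤ s) {s : ℝ} (hs : 0 ≤ s) (h : QiterLE G P φ l l') :
    QiterLE G P φ (s :: l) (s :: l') :=
  fun g hg => Qcut_mono hP hφ (Qiter_mem_Icc hP hφ hl hg) (Qiter_mem_Icc hP hφ hl' hg) (h g hg) hs

lemma QiterLE_cons_sub (hP : IsHeatSemigroup G P) (hφ : ∀ x, φ x ≤ C) (hl : ∀ s ∈ l, 0 ≤ s)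
    {a b : ℝ} (ha : 0 ≤ a) (hab : a ≤ b) : QiterLE G P φ (a :: (b - a) :: l) (b :: l) := by
  intro g hg
  have := Qcut_comp_le hP hφ (Qiter_mem_Icc hP hφ hl hg) ha (sub_nonneg.2 hab)
  rwa [add_sub_cancel] at this

end Qiter

section Refinement

variable {V : Type} {G : WeightedGraph V} {P : ℝ → (V → ℝ) → V → ℝ} {φ : V → ℝ} {C : ℝ}

lemma exists_common_refinement (hP : IsHeatSemigroup G P) (hφ : ∀ x, φ x ≤ C) {a b : List ℝ}
    (ha : ∀ s ∈ a, 0 ≤ s) (hb : ∀ s ∈ b, 0 ≤ s) (hab : a.sum = b.sum) :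
    ∃ c : List ℝ, (∀ s ∈ c, 0 ≤ s) ∧ c.sum = a.sum ∧ QiterLE G P φ c a ∧ QiterLE G P φ c b := by
  obtain ⟨n, hn⟩ : ∃ n, a.length + b.length ≤ n := ⟨_, le_rfl⟩
  induction n generalizing a b with
  | zero =>
    obtain ⟨rfl, rfl⟩ : a = [] ∧ b = [] := by simpa using hn
    exact ⟨[], ha, rfl, fun _ _ => le_rfl, fun _ _ => le_rfl⟩
  | succ n ih =>
    rcases a with _ | ⟨α, a⟩
    · refine ⟨[], ha, rfl, fun _ _ => le_rfl, fun g hg => ?_⟩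
      exact (Qiter_of_sum_eq_zero hP hφ hb hab.symm hg).ge
    rcases b with _ | ⟨β, b⟩
    · refine ⟨[], hb, hab.symm, fun g hg => ?_, fun _ _ => le_rfl⟩
      exact (Qiter_of_sum_eq_zero hP hφ ha hab hg).ge
    wlog hαβ : α ≤ β generalizing α β a b
    · obtain ⟨c, hc, hcsum, hcb, hca⟩ :=
        this β b hb α a ha hab.symm (by simpa [add_comm] using hn) (le_of_not_ge hαβ)
      exact ⟨c, hc, hcsum.trans hab.symm, hca, hcb⟩
    simp only [List.forall_mem_cons, List.sum_cons, List.length_cons] at ha hb hab hn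
    have hb' : ∀ s ∈ (β - α) :: b, 0 ≤ s := List.forall_mem_cons.2 ⟨sub_nonneg.2 hαβ, hb.2⟩
    obtain ⟨c, hc, hcsum, hca, hcb⟩ :=
      ih ha.2 hb' (by rw [List.sum_cons]; linarith) (by simp only [List.length_cons]; omega)
    refine ⟨α :: c, List.forall_mem_cons.2 ⟨ha.1, hc⟩, by simp [hcsum], ?_, ?_⟩
    · exact hca.cons hP hφ hc ha.2 ha.1
    · exact (hcb.cons hP hφ hc hb' ha.1).trans (QiterLE_cons_sub hP hφ hb.2 ha.1 hαβ)

lemma exists_split (hP : IsHeatSemigroup G P) (hφ : ∀ x, φ x ≤ C) {l : List ℝ}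
    (hl : ∀ s ∈ l, 0 ≤ s) {t s : ℝ} (ht : 0 ≤ t) (hs : 0 ≤ s) (hsum : l.sum = t + s) :
    ∃ l₁ l₂ : List ℝ, (∀ u ∈ l₁, 0 ≤ u) ∧ l₁.sum = t ∧ (∀ u ∈ l₂, 0 ≤ u) ∧ l₂.sum = s ∧
      QiterLE G P φ (l₁ ++ l₂) l := by
  induction l generalizing t with
  | nil =>
    obtain ⟨rfl, rfl⟩ : t = 0 ∧ s = 0 := by
      constructor <;> linarith [show t + s = 0 from hsum.symm.trans List.sum_nil]
    exact ⟨[], [], hl, rfl, hl, rfl, fun _ _ => le_rfl⟩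
  | cons a l ih =>
    rw [List.forall_mem_cons] at hl
    rw [List.sum_cons] at hsum
    by_cases hat : a ≤ t
    · obtain ⟨l₁, l₂, h₁, hsum₁, h₂, hsum₂, hle⟩ :=
        ih hl.2 (sub_nonneg.2 hat) (by linarith)
      refine ⟨a :: l₁, l₂, List.forall_mem_cons.2 ⟨hl.1, h₁⟩, by simp [hsum₁], h₂, hsum₂, ?_⟩
      exact hle.cons hP hφ (fun u hu => (List.mem_append.1 hu).elim (h₁ u) (h₂ u)) hl.2 hl.1
    · refine ⟨[t], (a - t) :: l, by simpa using ht, by simp,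
        List.forall_mem_cons.2 ⟨by linarith, hl.2⟩, by simp; linarith, ?_⟩
      exact QiterLE_cons_sub hP hφ hl.2 ht (by linarith)

end Refinement

section Pcut

variable {V : Type} {G : WeightedGraph V} {P : ℝ → (V → ℝ) → V → ℝ} {φ g : V → ℝ} {C t : ℝ}

lemma Pcut_eq_sInf (x : V) : Pcut G P φ t g x =
    sInf {c | ∃ l : List ℝ, (∀ s ∈ l, 0 ≤ s) ∧ l.sum = t ∧ c = Qiter G P φ l g x} := rfl

lemma Pcut_le_Qiter (hP : IsHeatSemigroup G P) (hφ : ∀ x, φ x ≤ C) (hg : g ∈ Icc 0 φ)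
    {l : List ℝ} (hl : ∀ s ∈ l, 0 ≤ s) (hsum : l.sum = t) (x : V) :
    Pcut G P φ t g x ≤ Qiter G P φ l g x := by
  rw [Pcut_eq_sInf]
  refine csInf_le ⟨0, ?_⟩ ⟨l, hl, hsum, rfl⟩
  rintro _ ⟨l, hl, -, rfl⟩
  exact (Qiter_mem_Icc hP hφ hl hg).1 x

lemma le_Pcut (ht : 0 ≤ t) {c : ℝ} {x : V}
    (h : ∀ l : List ℝ, (∀ s ∈ l, 0 ≤ s) → l.sum = t → c ≤ Qiter G P φ l g x) :
    c ≤ Pcut G P φ t g x := by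
  rw [Pcut_eq_sInf]
  refine le_csInf ⟨_, [t], by simpa using ht, by simp, rfl⟩ ?_
  rintro _ ⟨l, hl, hsum, rfl⟩
  exact h l hl hsum

lemma Pcut_mem_Icc (hP : IsHeatSemigroup G P) (hφ : ∀ x, φ x ≤ C) (hg : g ∈ Icc 0 φ)
    (ht : 0 ≤ t) : Pcut G P φ t g ∈ Icc 0 φ :=
  ⟨fun x => le_Pcut ht fun _ hl _ => (Qiter_mem_Icc hP hφ hl hg).1 x,
    fun x => (Pcut_le_Qiter hP hφ hg (l := [t]) (by simpa using ht) (by simp) x).trans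
      (min_le_right _ _)⟩

lemma exists_Qiter_lt (ht : 0 ≤ t) {ε : ℝ} (hε : 0 < ε) (x : V) :
    ∃ l : List ℝ, (∀ s ∈ l, 0 ≤ s) ∧ l.sum = t ∧
      Qiter G P φ l g x < Pcut G P φ t g x + ε := by
  obtain ⟨_, ⟨l, hl, hsum, rfl⟩, hlt⟩ := exists_lt_of_csInf_lt (s := {c | ∃ l : List ℝ,
    (∀ s ∈ l, 0 ≤ s) ∧ l.sum = t ∧ c = Qiter G P φ l g x})
    ⟨_, [t], by simpa using ht, by simp, rfl⟩ (lt_add_of_pos_right (Pcut G P φ t g x) hε)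
  exact ⟨l, hl, hsum, hlt⟩

lemma exists_Qiter_le_Pcut_add_of_finset (hP : IsHeatSemigroup G P) (hφ : ∀ x, φ x ≤ C)
    (hg : g ∈ Icc 0 φ) (ht : 0 ≤ t) {ε : ℝ} (hε : 0 < ε) (F : Finset V) :
    ∃ l : List ℝ, (∀ s ∈ l, 0 ≤ s) ∧ l.sum = t ∧
      ∀ y ∈ F, Qiter G P φ l g y ≤ Pcut G P φ t g y + ε := by
  classical
  induction F using Finset.induction_on with
  | empty => exact ⟨[t], by simpa using ht, by simp, by simp⟩
  | insert y F _ ih =>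
    obtain ⟨l₁, hl₁, hsum₁, hF⟩ := ih
    obtain ⟨l₂, hl₂, hsum₂, hy⟩ := exists_Qiter_lt (G := G) (P := P) (φ := φ) (g := g) ht hε y
    obtain ⟨c, hc, hcsum, hc₁, hc₂⟩ :=
      exists_common_refinement hP hφ hl₁ hl₂ (hsum₁.trans hsum₂.symm)
    refine ⟨c, hc, hcsum.trans hsum₁, (Finset.forall_mem_insert _ _ _).2 ⟨?_, fun z hz => ?_⟩⟩
    · exact (hc₂ g hg y).trans hy.le
    · exact (hc₁ g hg z).trans (hF z hz)

lemma exists_Qiter_le_Pcut_add (hP : IsHeatSemigroup G P) (hφ : ∀ x, φ x ≤ C)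
    (hφfin : (Function.support φ).Finite) (hg : g ∈ Icc 0 φ) (ht : 0 ≤ t) {ε : ℝ}
    (hε : 0 < ε) :
    ∃ l : List ℝ, (∀ s ∈ l, 0 ≤ s) ∧ l.sum = t ∧
      ∀ y, Qiter G P φ l g y ≤ Pcut G P φ t g y + ε := by
  obtain ⟨l, hl, hsum, hF⟩ := exists_Qiter_le_Pcut_add_of_finset hP hφ hg ht hε hφfin.toFinset
  refine ⟨l, hl, hsum, fun y => ?_⟩
  by_cases hy : φ y = 0
  · calc Qiter G P φ l g y ≤ φ y := (Qiter_mem_Icc hP hφ hl hg).2 y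
      _ = 0 := hy
      _ ≤ Pcut G P φ t g y + ε := add_nonneg ((Pcut_mem_Icc hP hφ hg ht).1 y) hε.le
  · exact hF y (hφfin.mem_toFinset.2 hy)

lemma Pcut_Pcut_le (hP : IsHeatSemigroup G P) (hφ : ∀ x, φ x ≤ C) (hg : g ∈ Icc 0 φ)
    {s : ℝ} (hs : 0 ≤ s) (ht : 0 ≤ t) (x : V) :
    Pcut G P φ t (Pcut G P φ s g) x ≤ Pcut G P φ (t + s) g x := by
  refine le_Pcut (add_nonneg ht hs) fun l hl hsum => ?_
  obtain ⟨l₁, l₂, h₁, hsum₁, h₂, hsum₂, hle⟩ := exists_split hP hφ hl ht hs hsum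
  have hgs := Pcut_mem_Icc hP hφ hg hs
  calc Pcut G P φ t (Pcut G P φ s g) x ≤ Qiter G P φ l₁ (Pcut G P φ s g) x :=
        Pcut_le_Qiter hP hφ hgs h₁ hsum₁ x
    _ ≤ Qiter G P φ l₁ (Qiter G P φ l₂ g) x :=
        Qiter_mono hP hφ h₁ hgs (Qiter_mem_Icc hP hφ h₂ hg) (Pcut_le_Qiter hP hφ hg h₂ hsum₂) x
    _ = Qiter G P φ (l₁ ++ l₂) g x := by rw [Qiter_append]
    _ ≤ Qiter G P φ l g x := hle g hg x

lemma Pcut_le_Pcut_Pcut (hP : IsHeatSemigroup G P) (hφ : ∀ x, φ x ≤ C)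
    (hφfin : (Function.support φ).Finite) (hg : g ∈ Icc 0 φ) {s : ℝ} (hs : 0 ≤ s)
    (ht : 0 ≤ t) (x : V) :
    Pcut G P φ (t + s) g x ≤ Pcut G P φ t (Pcut G P φ s g) x := by
  refine le_of_forall_pos_le_add fun ε hε => sub_le_iff_le_add.1 ?_
  obtain ⟨l₂, h₂, hsum₂, happrox⟩ := exists_Qiter_le_Pcut_add hP hφ hφfin hg hs hε
  refine le_Pcut ht fun l hl hsum => sub_le_iff_le_add.2 ?_
  calc Pcut G P φ (t + s) g x ≤ Qiter G P φ (l ++ l₂) g x :=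
        Pcut_le_Qiter hP hφ hg (fun u hu => (List.mem_append.1 hu).elim (hl u) (h₂ u))
          (by rw [List.sum_append, hsum, hsum₂]) x
    _ = Qiter G P φ l (Qiter G P φ l₂ g) x := by rw [Qiter_append]
    _ ≤ Qiter G P φ l (Pcut G P φ s g) x + ε :=
        Qiter_le_add hP hφ hl (Qiter_mem_Icc hP hφ h₂ hg) (Pcut_mem_Icc hP hφ hg hs) hε.le
          happrox x

end Pcut

theorem stmt6_general {V : Type} (G : WeightedGraph V)
    (P : ℝ → (V → ℝ) → V → ℝ) (hP : IsHeatSemigroup G P)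
    (φ : V → ℝ) (hφfin : (Function.support φ).Finite)
    (f : V → ℝ) (hf0 : ∀ x, 0 ≤ f x) (hfφ : ∀ x, f x ≤ φ x)
    (s t : ℝ) (hs : 0 ≤ s) (ht : 0 ≤ t) :
    ∀ x, Pcut G P φ t (fun y => Pcut G P φ s f y) x = Pcut G P φ (t + s) f x := by
  obtain ⟨C, hC⟩ : BddAbove (range φ) :=
    (((hφfin.image φ).insert 0).subset (Function.range_subset_insert_image_support φ)).bddAbove
  have hφ : ∀ x, φ x ≤ C := fun x => hC (mem_range_self x)
  have hf : f ∈ Icc 0 φ := ⟨hf0, hfφ⟩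
  exact fun x => le_antisymm (Pcut_Pcut_le hP hφ hf hs ht x)
    (Pcut_le_Pcut_Pcut hP hφ hφfin hf hs ht x)

/-- The cutoff semigroup property: `P_t^φ P_s^φ f = P_{t+s}^φ f`. -/
theorem stmt6 {V : Type} [Countable V] (G : WeightedGraph V)
    (P : ℝ → (V → ℝ) → V → ℝ) (hP : IsHeatSemigroup G P)
    (φ : V → ℝ) (hφ0 : ∀ x, 0 ≤ φ x) (hφfin : (Function.support φ).Finite)
    (f : V → ℝ) (hf0 : ∀ x, 0 ≤ f x) (hfφ : ∀ x, f x ≤ φ x)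
    (s t : ℝ) (hs : 0 ≤ s) (ht : 0 ≤ t) :
    ∀ x, Pcut G P φ t (fun y => Pcut G P φ s f y) x = Pcut G P φ (t + s) f x :=
  stmt6_general G P hP φ hφfin f hf0 hfφ s t hs ht
end
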